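/- Let X and Y be independent real random variables on a probability space (Ω, P), all of whose moments are finite. If ξ is a score of X, then E[ξ | σ(X+Y)] is a score of X+Y, and consequently there is a score η of X+Y with E[η²] ≤ E[ξ²] (so Fisher information does not increase under addition of an independent random variable). -/

import Mathlib

open MeasureTheory ProbabilityTheory
open scoped ENNReal

section Helpers
variable {Ω : Type*} [m0 : MeasurableSpace Ω] {μ : Measure Ω}

lemma mul_integrable_of_memL2 {f g : Ω → ℝ} (hf : MemLp f 2 μ) (hg : MemLp g 2 μ) :
    Integrable (fun ω => f ω * g ω) μ := by
  have h : (1 : ℝ≥0∞) / 1 = 1 / 2 + 1 / 2 := by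
    rw [ENNReal.div_add_div_same, one_add_one_eq_two,
      ENNReal.div_self two_ne_zero ENNReal.ofNat_ne_top, div_one]
  exact memLp_one_iff_integrable.mp (hg.smul hf)

lemma memL2_pow_of_moments {W : Ω → ℝ} (hW : Measurable W)
    (h : ∀ m : ℕ, Integrable (fun ω => |W ω| ^ m) μ) (k : ℕ) :
    MemLp (fun ω => W ω ^ k) 2 μ := by
  rw [memLp_two_iff_integrable_sq (hW.pow_const k).aestronglyMeasurable]
  refine (h (2 * k)).congr (Filter.Eventually.of_forall fun ω => ?_)
  show |W ω| ^ (2 * k) = (W ω ^ k) ^ 2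
  rw [← sq_abs (W ω ^ k), abs_pow, ← pow_mul, mul_comm]

lemma moments_add {X Y : Ω → ℝ} (hX : Measurable X) (hY : Measurable Y)
    (hmomX : ∀ m : ℕ, Integrable (fun ω => |X ω| ^ m) μ)
    (hmomY : ∀ m : ℕ, Integrable (fun ω => |Y ω| ^ m) μ) (m : ℕ) :
    Integrable (fun ω => |X ω + Y ω| ^ m) μ := by
  have hb : ∀ x y : ℝ, |x + y| ^ m ≤ 2 ^ m * (|x| ^ m + |y| ^ m) := by
    intro x y
    calc |x + y| ^ m ≤ (|x| + |y|) ^ m :=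
          pow_le_pow_left₀ (abs_nonneg _) (abs_add_le x y) m
      _ ≤ (2 * max |x| |y|) ^ m := by
          refine pow_le_pow_left₀ (by positivity) ?_ m
          rcases le_total |x| |y| with h | h
          · rw [max_eq_right h]; nlinarith [abs_nonneg x, abs_nonneg y]
          · rw [max_eq_left h]; nlinarith [abs_nonneg x, abs_nonneg y]
      _ = 2 ^ m * max |x| |y| ^ m := mul_pow _ _ _
      _ ≤ 2 ^ m * (|x| ^ m + |y| ^ m) := by
          refine mul_le_mul_of_nonneg_left ?_ (by positivity)
          rcases le_total |x| |y| with h | h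
          · rw [max_eq_right h]; nlinarith [pow_nonneg (abs_nonneg x) m]
          · rw [max_eq_left h]; nlinarith [pow_nonneg (abs_nonneg y) m]
  have hint : Integrable (fun ω => 2 ^ m * (|X ω| ^ m + |Y ω| ^ m)) μ :=
    ((hmomX m).add (hmomY m)).const_mul _
  refine hint.mono (((hX.add hY).abs.pow_const m).aestronglyMeasurable) ?_
  refine Filter.Eventually.of_forall fun ω => ?_
  have h1 : (0:ℝ) ≤ |X ω + Y ω| ^ m := by positivity
  have h2 : (0:ℝ) ≤ 2 ^ m * (|X ω| ^ m + |Y ω| ^ m) := by positivity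
  rw [Real.norm_eq_abs, Real.norm_eq_abs, abs_of_nonneg h1, abs_of_nonneg h2]
  exact hb _ _

end Helpers

lemma condexp_memL2 {Ω : Type*} {m m0 : MeasurableSpace Ω} {μ : Measure Ω}
    [IsProbabilityMeasure μ] (hm : m ≤ m0)
    {f : Ω → ℝ} (hf : MemLp f 2 μ) : MemLp (μ[f|m]) 2 μ := by
  set F : Lp ℝ 2 μ := hf.toLp f with hF
  have hae : ((condExpL2 ℝ ℝ hm F : Lp ℝ 2 μ) : Ω → ℝ) =ᵐ[μ] μ[f|m] := by
    refine ae_eq_condExp_of_forall_setIntegral_eq hm (hf.integrable one_le_two) ?_ ?_ ?_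
    · intro s hs hμs
      exact integrableOn_condExpL2_of_measure_ne_top hm hμs.ne F
    · intro s hs hμs
      rw [integral_condExpL2_eq hm F hs hμs.ne]
      have hs0 : MeasurableSet[m0] s := hm s hs
      exact setIntegral_congr_ae hs0 ((hf.coeFn_toLp).mono fun x hx _ => hx)
    · exact aestronglyMeasurable_condExpL2 hm F
  exact (Lp.memLp _).ae_eq hae

/-- A *score* of a real random variable `Y` on `(Ω, μ)`: a square-integrable
`σ(Y)`-measurable random variable `ξ` with `E[ξ·q(Y)] = E[q′(Y)]` for every
polynomial `q` in one real variable. -/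
def IsScore {Ω : Type*} [MeasurableSpace Ω] (μ : Measure Ω) (Y ξ : Ω → ℝ) : Prop :=
  MemLp ξ 2 μ ∧ Measurable[MeasurableSpace.comap Y inferInstance] ξ ∧
    ∀ q : Polynomial ℝ,
      ∫ ω, ξ ω * q.eval (Y ω) ∂μ = ∫ ω, (Polynomial.derivative q).eval (Y ω) ∂μ

/-- If `X` and `Y` are independent with all moments finite and `ξ` is a
score of `X`, then `E[ξ | σ(X+Y)]` is a score of `X + Y`; consequently `X + Y` has a score
`η` with `E[η²] ≤ E[ξ²]` (Fisher information does not increase under adding an independent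
random variable). -/
theorem condexp_isScore_add_and_fisher_mono
    {Ω : Type*} [MeasurableSpace Ω] (μ : Measure Ω) [IsProbabilityMeasure μ]
    (X Y : Ω → ℝ) (hX : Measurable X) (hY : Measurable Y)
    (hindep : IndepFun X Y μ)
    (hmomX : ∀ m : ℕ, Integrable (fun ω => |X ω| ^ m) μ)
    (hmomY : ∀ m : ℕ, Integrable (fun ω => |Y ω| ^ m) μ)
    (ξ : Ω → ℝ) (hξ : IsScore μ X ξ) :
    IsScore μ (X + Y) (μ[ξ | MeasurableSpace.comap (X + Y) inferInstance]) ∧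
      ∃ η : Ω → ℝ, IsScore μ (X + Y) η ∧
        ∫ ω, η ω ^ 2 ∂μ ≤ ∫ ω, ξ ω ^ 2 ∂μ := by
  obtain ⟨hξ2, hξm, hξs⟩ := hξ
  have hZ : Measurable (X + Y) := hX.add hY
  have hm : MeasurableSpace.comap (X + Y) inferInstance ≤ ‹MeasurableSpace Ω› := hZ.comap_le
  -- moments and L² facts
  have hX2 : ∀ k : ℕ, MemLp (fun ω => X ω ^ k) 2 μ := memL2_pow_of_moments hX hmomX
  have hY2 : ∀ k : ℕ, MemLp (fun ω => Y ω ^ k) 2 μ := memL2_pow_of_moments hY hmomY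
  have hZ2 : ∀ k : ℕ, MemLp (fun ω => (X ω + Y ω) ^ k) 2 μ := by
    have := memL2_pow_of_moments (μ := μ) hZ (moments_add hX hY hmomX hmomY)
    exact this
  have hXint : ∀ k : ℕ, Integrable (fun ω => X ω ^ k) μ := fun k => (hX2 k).integrable one_le_two
  have hYint : ∀ k : ℕ, Integrable (fun ω => Y ω ^ k) μ := fun k => (hY2 k).integrable one_le_two
  have hq2 : ∀ q : Polynomial ℝ, MemLp (fun ω => q.eval (X ω + Y ω)) 2 μ := by
    intro q
    have e : (fun ω => q.eval (X ω + Y ω)) =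
        fun ω => ∑ i ∈ Finset.range (q.natDegree + 1), q.coeff i * (X ω + Y ω) ^ i := by
      funext ω; exact Polynomial.eval_eq_sum_range _
    rw [e]
    exact memLp_finsetSum _ fun i _ => (hZ2 i).const_mul _
  -- the score relation for powers of X
  have score_pow : ∀ k : ℕ, ∫ ω, ξ ω * X ω ^ k ∂μ = (k : ℝ) * ∫ ω, X ω ^ (k - 1) ∂μ := by
    intro k
    have h := hξs (Polynomial.X ^ k)
    simp only [Polynomial.eval_pow, Polynomial.eval_X, Polynomial.derivative_X_pow,
      Polynomial.eval_mul, Polynomial.eval_natCast, Polynomial.eval_C] at h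
    rw [h, integral_const_mul]
  -- measurability with respect to σ(X)
  have mX : ∀ k : ℕ, Measurable[MeasurableSpace.comap X inferInstance] (fun ω => X ω ^ k) :=
    fun k => (comap_measurable X).pow_const k
  have mξX : ∀ k : ℕ, Measurable[MeasurableSpace.comap X inferInstance]
      (fun ω => ξ ω * X ω ^ k) := fun k => hξm.mul (mX k)
  -- independence of σ(X)-measurable functions from powers of Y
  have hIndep : ∀ f : Ω → ℝ, Measurable[MeasurableSpace.comap X inferInstance] f →
      ∀ j : ℕ, IndepFun f (fun ω => Y ω ^ j) μ := by
    intro f hf j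
    have h := (IndepFun_iff_Indep X Y μ).mp hindep
    rw [IndepFun_iff_Indep]
    exact indep_of_indep_of_le_right
      (indep_of_indep_of_le_left h (measurable_iff_comap_le.mp hf))
      (measurable_iff_comap_le.mp ((comap_measurable Y).pow_const j))
  have hmulint : ∀ f : Ω → ℝ, Measurable[MeasurableSpace.comap X inferInstance] f →
      Integrable f μ → ∀ j : ℕ, Integrable (fun ω => f ω * Y ω ^ j) μ :=
    fun f hf hfi j => (hIndep f hf j).integrable_mul hfi (hYint j)
  have hmul_eq : ∀ f : Ω → ℝ, Measurable[MeasurableSpace.comap X inferInstance] f →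
      Integrable f μ → ∀ j : ℕ,
      ∫ ω, f ω * Y ω ^ j ∂μ = (∫ ω, f ω ∂μ) * ∫ ω, Y ω ^ j ∂μ :=
    fun f hf hfi j => (hIndep f hf j).integral_fun_mul_eq_mul_integral hfi.aestronglyMeasurable (hYint j).aestronglyMeasurable
  have hξXint : ∀ k : ℕ, Integrable (fun ω => ξ ω * X ω ^ k) μ :=
    fun k => mul_integrable_of_memL2 hξ2 (hX2 k)
  -- binomial expansion of moments of X + Y
  have expand : ∀ p : ℕ, ∫ ω, (X ω + Y ω) ^ p ∂μ =
      ∑ j ∈ Finset.range (p + 1),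
        (p.choose j : ℝ) * ((∫ ω, X ω ^ j ∂μ) * ∫ ω, Y ω ^ (p - j) ∂μ) := by
    intro p
    calc ∫ ω, (X ω + Y ω) ^ p ∂μ
        = ∫ ω, ∑ j ∈ Finset.range (p + 1),
            X ω ^ j * Y ω ^ (p - j) * (p.choose j : ℝ) ∂μ := by
          refine integral_congr_ae (Filter.Eventually.of_forall fun ω => ?_)
          exact add_pow _ _ _
      _ = ∑ j ∈ Finset.range (p + 1), ∫ ω, X ω ^ j * Y ω ^ (p - j) * (p.choose j : ℝ) ∂μ :=
          integral_finset_sum _ fun j _ => (hmulint _ (mX j) (hXint j) _).mul_const _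
      _ = ∑ j ∈ Finset.range (p + 1),
            (p.choose j : ℝ) * ((∫ ω, X ω ^ j ∂μ) * ∫ ω, Y ω ^ (p - j) ∂μ) := by
          refine Finset.sum_congr rfl fun j _ => ?_
          rw [integral_mul_const, hmul_eq _ (mX j) (hXint j) _, mul_comm]
  -- the key computation for monomials
  have key_pow : ∀ n : ℕ, ∫ ω, ξ ω * (X ω + Y ω) ^ n ∂μ
      = (n : ℝ) * ∫ ω, (X ω + Y ω) ^ (n - 1) ∂μ := by
    intro n
    match n with
    | 0 =>
      have h0 := score_pow 0
      simp only [pow_zero, mul_one, Nat.cast_zero, zero_mul] at h0 ⊢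
      exact h0
    | (p + 1) =>
      simp only [Nat.add_sub_cancel]
      calc ∫ ω, ξ ω * (X ω + Y ω) ^ (p + 1) ∂μ
          = ∫ ω, ∑ k ∈ Finset.range (p + 2),
              ξ ω * X ω ^ k * Y ω ^ (p + 1 - k) * ((p + 1).choose k : ℝ) ∂μ := by
            refine integral_congr_ae (Filter.Eventually.of_forall fun ω => ?_)
            show ξ ω * (X ω + Y ω) ^ (p + 1)
              = ∑ k ∈ Finset.range (p + 2),
                  ξ ω * X ω ^ k * Y ω ^ (p + 1 - k) * ((p + 1).choose k : ℝ)
            rw [add_pow, Finset.mul_sum]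
            exact Finset.sum_congr rfl fun k _ => by ring
        _ = ∑ k ∈ Finset.range (p + 2),
              ∫ ω, ξ ω * X ω ^ k * Y ω ^ (p + 1 - k) * ((p + 1).choose k : ℝ) ∂μ :=
            integral_finset_sum _ fun k _ => (hmulint _ (mξX k) (hξXint k) _).mul_const _
        _ = ∑ k ∈ Finset.range (p + 2),
              ((k : ℝ) * ∫ ω, X ω ^ (k - 1) ∂μ) * (∫ ω, Y ω ^ (p + 1 - k) ∂μ)
                * ((p + 1).choose k : ℝ) := by
            refine Finset.sum_congr rfl fun k _ => ?_
            rw [integral_mul_const, hmul_eq _ (mξX k) (hξXint k) _, score_pow k]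
        _ = ∑ i ∈ Finset.range (p + 1),
              ((p : ℝ) + 1) * ((p.choose i : ℝ) * ((∫ ω, X ω ^ i ∂μ) * ∫ ω, Y ω ^ (p - i) ∂μ)) := by
            rw [Finset.sum_range_succ']
            simp only [Nat.cast_zero, zero_mul, add_zero, Nat.succ_sub_succ, Nat.add_sub_cancel,
              Nat.sub_zero]
            refine Finset.sum_congr rfl fun i _ => ?_
            have hc : ((p + 1) * p.choose i : ℕ) = ((p + 1).choose (i + 1) * (i + 1) : ℕ) :=
              Nat.add_one_mul_choose_eq p i
            have hc' : ((p : ℝ) + 1) * (p.choose i : ℝ)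
                = ((p + 1).choose (i + 1) : ℝ) * ((i : ℝ) + 1) := by exact_mod_cast hc
            push_cast
            linear_combination (-((∫ ω, X ω ^ i ∂μ) * ∫ ω, Y ω ^ (p - i) ∂μ)) * hc'
        _ = ((p : ℝ) + 1) * ∫ ω, (X ω + Y ω) ^ p ∂μ := by
            rw [expand p, Finset.mul_sum]
        _ = ((p + 1 : ℕ) : ℝ) * ∫ ω, (X ω + Y ω) ^ p ∂μ := by push_cast; ring
  -- the key identity for general polynomials
  have key : ∀ q : Polynomial ℝ, ∫ ω, ξ ω * q.eval (X ω + Y ω) ∂μ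
      = ∫ ω, (Polynomial.derivative q).eval (X ω + Y ω) ∂μ := by
    intro q
    induction q using Polynomial.induction_on' with
    | add p r hp hr =>
      have i1 : Integrable (fun ω => ξ ω * p.eval (X ω + Y ω)) μ :=
        mul_integrable_of_memL2 hξ2 (hq2 p)
      have i2 : Integrable (fun ω => ξ ω * r.eval (X ω + Y ω)) μ :=
        mul_integrable_of_memL2 hξ2 (hq2 r)
      have i3 : Integrable (fun ω => (Polynomial.derivative p).eval (X ω + Y ω)) μ :=
        (hq2 _).integrable one_le_two
      have i4 : Integrable (fun ω => (Polynomial.derivative r).eval (X ω + Y ω)) μ :=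
        (hq2 _).integrable one_le_two
      simp only [Polynomial.eval_add, Polynomial.derivative_add, mul_add]
      rw [integral_add i1 i2, integral_add i3 i4, hp, hr]
    | monomial n a =>
      simp only [Polynomial.eval_monomial, Polynomial.derivative_monomial]
      calc ∫ ω, ξ ω * (a * (X ω + Y ω) ^ n) ∂μ
          = a * ∫ ω, ξ ω * (X ω + Y ω) ^ n ∂μ := by
            rw [← integral_const_mul]
            refine integral_congr_ae (Filter.Eventually.of_forall fun ω => ?_)
            show ξ ω * (a * (X ω + Y ω) ^ n) = a * (ξ ω * (X ω + Y ω) ^ n)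
            ring
        _ = a * ((n : ℝ) * ∫ ω, (X ω + Y ω) ^ (n - 1) ∂μ) := by rw [key_pow n]
        _ = ∫ ω, a * (n : ℝ) * (X ω + Y ω) ^ (n - 1) ∂μ := by
            rw [integral_const_mul]; ring
  -- conditional expectation facts
  have hηL2 : MemLp (μ[ξ | MeasurableSpace.comap (X + Y) inferInstance]) 2 μ :=
    condexp_memL2 hm hξ2
  have hηm : Measurable[MeasurableSpace.comap (X + Y) inferInstance]
      (μ[ξ | MeasurableSpace.comap (X + Y) inferInstance]) :=
    stronglyMeasurable_condExp.measurable
  have hξint : Integrable ξ μ := hξ2.integrable one_le_two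
  -- the conditional expectation is a score of X + Y
  have hscore : IsScore μ (X + Y) (μ[ξ | MeasurableSpace.comap (X + Y) inferInstance]) := by
    refine ⟨hηL2, hηm, fun q => ?_⟩
    show ∫ ω, (μ[ξ | MeasurableSpace.comap (X + Y) inferInstance]) ω * q.eval (X ω + Y ω) ∂μ
      = ∫ ω, (Polynomial.derivative q).eval (X ω + Y ω) ∂μ
    have hqm : StronglyMeasurable[MeasurableSpace.comap (X + Y) inferInstance]
        (fun ω => q.eval (X ω + Y ω)) := by
      refine Measurable.stronglyMeasurable ?_
      exact (Polynomial.continuous q).measurable.comp (comap_measurable (X + Y))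
    have hint1 : Integrable ((fun ω => q.eval (X ω + Y ω)) * ξ) μ :=
      mul_integrable_of_memL2 (hq2 q) hξ2
    have pull := condExp_mul_of_stronglyMeasurable_left hqm hint1 hξint
    calc ∫ ω, (μ[ξ | MeasurableSpace.comap (X + Y) inferInstance]) ω * q.eval (X ω + Y ω) ∂μ
        = ∫ ω, ((fun ω => q.eval (X ω + Y ω))
            * μ[ξ | MeasurableSpace.comap (X + Y) inferInstance]) ω ∂μ := by
          refine integral_congr_ae (Filter.Eventually.of_forall fun ω => ?_)
          simp [mul_comm]
      _ = ∫ ω, (μ[(fun ω => q.eval (X ω + Y ω)) * ξ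
            | MeasurableSpace.comap (X + Y) inferInstance]) ω ∂μ :=
          integral_congr_ae pull.symm
      _ = ∫ ω, ((fun ω => q.eval (X ω + Y ω)) * ξ) ω ∂μ := integral_condExp hm
      _ = ∫ ω, ξ ω * q.eval (X ω + Y ω) ∂μ := by
          refine integral_congr_ae (Filter.Eventually.of_forall fun ω => ?_)
          simp [mul_comm]
      _ = ∫ ω, (Polynomial.derivative q).eval (X ω + Y ω) ∂μ := key q
  refine ⟨hscore, μ[ξ | MeasurableSpace.comap (X + Y) inferInstance], hscore, ?_⟩
  -- the Fisher information inequality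
  have hηint : Integrable (μ[ξ | MeasurableSpace.comap (X + Y) inferInstance]) μ :=
    hηL2.integrable one_le_two
  have hηξint : Integrable ((μ[ξ | MeasurableSpace.comap (X + Y) inferInstance]) * ξ) μ :=
    mul_integrable_of_memL2 hηL2 hξ2
  have pull2 := condExp_mul_of_stronglyMeasurable_left
    (stronglyMeasurable_condExp (m := MeasurableSpace.comap (X + Y) inferInstance) (f := ξ))
    hηξint hξint
  have e1 : ∫ ω, (μ[ξ | MeasurableSpace.comap (X + Y) inferInstance]) ω * ξ ω ∂μ
      = ∫ ω, (μ[ξ | MeasurableSpace.comap (X + Y) inferInstance]) ω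
          * (μ[ξ | MeasurableSpace.comap (X + Y) inferInstance]) ω ∂μ := by
    calc ∫ ω, (μ[ξ | MeasurableSpace.comap (X + Y) inferInstance]) ω * ξ ω ∂μ
        = ∫ ω, (μ[(μ[ξ | MeasurableSpace.comap (X + Y) inferInstance]) * ξ
            | MeasurableSpace.comap (X + Y) inferInstance]) ω ∂μ := (integral_condExp hm).symm
      _ = ∫ ω, ((μ[ξ | MeasurableSpace.comap (X + Y) inferInstance])
            * μ[ξ | MeasurableSpace.comap (X + Y) inferInstance]) ω ∂μ :=
          integral_congr_ae pull2
      _ = _ := rfl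
  have hξsq : Integrable (fun ω => ξ ω ^ 2) μ := hξ2.integrable_sq
  have hηsq : Integrable (fun ω => (μ[ξ | MeasurableSpace.comap (X + Y) inferInstance]) ω ^ 2) μ :=
    hηL2.integrable_sq
  have hmix : Integrable (fun ω => ξ ω * (μ[ξ | MeasurableSpace.comap (X + Y) inferInstance]) ω) μ :=
    mul_integrable_of_memL2 hξ2 hηL2
  have hnonneg : 0 ≤ ∫ ω, (ξ ω - (μ[ξ | MeasurableSpace.comap (X + Y) inferInstance]) ω) ^ 2 ∂μ :=
    integral_nonneg fun ω => sq_nonneg _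
  have expand2 : ∫ ω, (ξ ω - (μ[ξ | MeasurableSpace.comap (X + Y) inferInstance]) ω) ^ 2 ∂μ
      = ∫ ω, ξ ω ^ 2 ∂μ
        - 2 * ∫ ω, ξ ω * (μ[ξ | MeasurableSpace.comap (X + Y) inferInstance]) ω ∂μ
        + ∫ ω, (μ[ξ | MeasurableSpace.comap (X + Y) inferInstance]) ω ^ 2 ∂μ := by
    have e : (fun ω => (ξ ω - (μ[ξ | MeasurableSpace.comap (X + Y) inferInstance]) ω) ^ 2)
        = fun ω => ξ ω ^ 2 - 2 * (ξ ω * (μ[ξ | MeasurableSpace.comap (X + Y) inferInstance]) ω)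
            + (μ[ξ | MeasurableSpace.comap (X + Y) inferInstance]) ω ^ 2 :=
      funext fun ω => by ring
    have i5 : Integrable (fun ω => ξ ω ^ 2
        - 2 * (ξ ω * (μ[ξ | MeasurableSpace.comap (X + Y) inferInstance]) ω)) μ :=
      hξsq.sub (hmix.const_mul 2)
    have i6 : Integrable (fun ω =>
        2 * (ξ ω * (μ[ξ | MeasurableSpace.comap (X + Y) inferInstance]) ω)) μ :=
      hmix.const_mul 2
    rw [e, integral_add i5 hηsq, integral_sub hξsq i6, integral_const_mul]
  have e2 : ∫ ω, ξ ω * (μ[ξ | MeasurableSpace.comap (X + Y) inferInstance]) ω ∂μ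
      = ∫ ω, (μ[ξ | MeasurableSpace.comap (X + Y) inferInstance]) ω ^ 2 ∂μ := by
    rw [show (fun ω => ξ ω * (μ[ξ | MeasurableSpace.comap (X + Y) inferInstance]) ω)
        = fun ω => (μ[ξ | MeasurableSpace.comap (X + Y) inferInstance]) ω * ξ ω from
        funext fun ω => by ring]
    rw [e1]
    exact integral_congr_ae (Filter.Eventually.of_forall fun ω => by ring)
  linarith [hnonneg, expand2, e2]
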